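/- Let n ≥ 1 and let T be an n-dimensional simplex in ℝ^n. Then the difference body D(T) = T + (−T) satisfies vol(D(T)) = C(2n, n) · vol(T). -/

import Mathlib

open Pointwise MeasureTheory

/-!
An affine change of variables carries the corner simplex `Δ = {x ≥ 0, ∑ xᵢ ≤ 1}` of `ℝⁿ` onto
`T`, and multiplies the volumes of `Δ` and of `Δ - Δ` by the same factor, so it suffices to show
`vol (Δ - Δ) = C(2n, n) / n!` and `vol Δ = 1 / n!`.

Sort the points `x` of `Δ - Δ` by their sign pattern `A = {i | 0 ≤ xᵢ}`: once the signs of the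
coordinates outside `A` are flipped, `x ∈ Δ - Δ` says exactly that the `A`-coordinates form a
point of the corner simplex of `ℝ^A` and the other coordinates one of `ℝ^Aᶜ`. The sign flips
preserve volume and the pieces only meet on coordinate hyperplanes, hence
`vol (Δ - Δ) = ∑_A 1 / (|A|! (n - |A|)!) = ∑_k C(n, k)² / n! = C(2n, n) / n!`.
The same reflection argument writes the `ℓ¹` unit ball, of known volume `2ⁿ / n!`, as `2ⁿ`
copies of `Δ`, which gives `vol Δ = 1 / n!`.
-/

open Finset
open scoped Nat

def cornerSimplex (ι : Type*) [Fintype ι] : Set (ι → ℝ) := {x | 0 ≤ x ∧ ∑ i, x i ≤ 1}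

lemma measurableSet_cornerSimplex (ι : Type*) [Fintype ι] : MeasurableSet (cornerSimplex ι) :=
  measurableSet_Ici.inter
    (measurableSet_le (Finset.measurable_sum _ fun i _ => measurable_pi_apply i) measurable_const)

lemma cornerSimplex_subset_Ici (ι : Type*) [Fintype ι] : cornerSimplex ι ⊆ Set.Ici 0 :=
  fun _ hx => hx.1

section SignFlip

variable {ι : Type*} [DecidableEq ι]

def signFlip (A : Finset ι) (x : ι → ℝ) : ι → ℝ := fun i => if i ∈ A then x i else -x i

lemma signFlip_eq_abs_of_nonneg {A : Finset ι} {x : ι → ℝ} (hx : 0 ≤ signFlip A x) :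
    signFlip A x = |x| := by
  ext i
  have := hx i
  simp only [signFlip, Pi.abs_apply] at this ⊢
  split_ifs at this ⊢
  · exact (abs_of_nonneg this).symm
  · exact (abs_of_nonpos (neg_nonneg.mp this)).symm

variable [Fintype ι]

lemma measurePreserving_signFlip (A : Finset ι) : MeasurePreserving (signFlip A) :=
  volume_preserving_pi (f := fun i (t : ℝ) => if i ∈ A then t else -t) fun i => by
    by_cases hi : i ∈ A
    · simp only [hi, if_true]
      exact MeasurePreserving.id volume
    · simpa [hi] using Measure.measurePreserving_neg volume

lemma signFlip_filter_nonneg_eq_abs (x : ι → ℝ) : signFlip {i | 0 ≤ x i} x = |x| := by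
  ext i
  by_cases hi : 0 ≤ x i
  · simp [signFlip, hi, abs_of_nonneg]
  · simp [signFlip, hi, abs_of_neg (not_le.mp hi)]

lemma aedisjoint_preimage_signFlip {A B : Finset ι} (hAB : A ≠ B) {S S' : Set (ι → ℝ)}
    (hS : S ⊆ Set.Ici 0) (hS' : S' ⊆ Set.Ici 0) :
    AEDisjoint volume (signFlip A ⁻¹' S) (signFlip B ⁻¹' S') := by
  obtain ⟨i, hi⟩ : ∃ i, ¬(i ∈ A ↔ i ∈ B) := by
    by_contra! h
    exact hAB (Finset.ext h)
  have hzero : signFlip A ⁻¹' S ∩ signFlip B ⁻¹' S' ⊆ {x | x i = 0} := by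
    rintro x ⟨hxA, hxB⟩
    have hA := hS hxA i
    have hB := hS' hxB i
    simp only [signFlip, Pi.zero_apply] at hA hB
    split_ifs at hA hB <;> simp_all <;> linarith
  refine measure_mono_null hzero ?_
  rw [volume_pi]
  exact Measure.pi_hyperplane _ i 0

lemma volume_iUnion_preimage_signFlip (S : Finset ι → Set (ι → ℝ))
    (hS : ∀ A, S A ⊆ Set.Ici 0) (hSm : ∀ A, MeasurableSet (S A)) :
    volume (⋃ A, signFlip A ⁻¹' S A) = ∑ A, volume (S A) := by
  rw [measure_iUnion₀ (fun A B hAB => aedisjoint_preimage_signFlip hAB (hS A) (hS B))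
    (fun A => ((hSm A).preimage (measurePreserving_signFlip A).measurable).nullMeasurableSet),
    tsum_fintype]
  exact Finset.sum_congr rfl fun A _ =>
    (measurePreserving_signFlip A).measure_preimage (hSm A).nullMeasurableSet

lemma iUnion_preimage_signFlip {S : Set (ι → ℝ)} (hS : S ⊆ Set.Ici 0) :
    ⋃ A, signFlip A ⁻¹' S = {x | |x| ∈ S} := by
  ext x
  simp only [Set.mem_iUnion, Set.mem_preimage, Set.mem_ofPred_eq]
  constructor
  · rintro ⟨A, hA⟩
    rwa [← signFlip_eq_abs_of_nonneg (hS hA)]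
  · intro hx
    exact ⟨_, by rwa [signFlip_filter_nonneg_eq_abs]⟩

end SignFlip

lemma volume_cornerSimplex (ι : Type*) [Fintype ι] :
    volume (cornerSimplex ι) = ENNReal.ofReal ((Fintype.card ι)! : ℝ)⁻¹ := by
  classical
  rcases isEmpty_or_nonempty ι with hι | hι
  · have huniv : cornerSimplex ι = Set.univ := by
      ext x
      simp [cornerSimplex]
    simp [huniv, volume_pi]
  · have hball : {x : ι → ℝ | (∑ i, |x i| ^ (1 : ℝ)) ^ (1 / 1 : ℝ) ≤ 1}
        = ⋃ A : Finset ι, signFlip A ⁻¹' cornerSimplex ι := by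
      rw [iUnion_preimage_signFlip (cornerSimplex_subset_Ici ι)]
      ext x
      simp [cornerSimplex, abs_nonneg]
    have h := volume_sum_rpow_le ι le_rfl 1
    rw [hball, volume_iUnion_preimage_signFlip _ (fun _ => cornerSimplex_subset_Ici ι)
      (fun _ => measurableSet_cornerSimplex ι)] at h
    simp only [sum_const, Finset.card_univ, Fintype.card_finset, nsmul_eq_mul, Nat.cast_pow,
      Nat.cast_ofNat, div_one, ENNReal.ofReal_one, one_pow, one_mul,
      Real.Gamma_nat_eq_factorial] at h
    rw [one_add_one_eq_two, Real.Gamma_two, mul_one, div_eq_mul_inv,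
      ENNReal.ofReal_mul (by positivity), ENNReal.ofReal_pow zero_le_two,
      ENNReal.ofReal_ofNat] at h
    exact (ENNReal.mul_right_inj (by simp) (by simp)).mp h

section DifferenceBody

variable {ι : Type*} [Fintype ι]

def cornerSimplexProd (p : ι → Prop) [DecidablePred p] : Set (ι → ℝ) :=
  MeasurableEquiv.piEquivPiSubtypeProd (fun _ => ℝ) p ⁻¹'
    (cornerSimplex {i // p i} ×ˢ cornerSimplex {i // ¬p i})

lemma mem_cornerSimplexProd {p : ι → Prop} [DecidablePred p] {y : ι → ℝ} :
    y ∈ cornerSimplexProd p ↔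
      0 ≤ y ∧ ∑ i with p i, y i ≤ 1 ∧ ∑ i with ¬p i, y i ≤ 1 := by
  have hp : ∑ i : {i // p i}, y i = ∑ i with p i, y i :=
    (Finset.sum_subtype _ (by simp) y).symm
  have hnp : ∑ i : {i // ¬p i}, y i = ∑ i with ¬p i, y i :=
    (Finset.sum_subtype _ (by simp) y).symm
  simp only [cornerSimplexProd, Set.mem_preimage, Set.mem_prod, cornerSimplex, Set.mem_ofPred_eq,
    MeasurableEquiv.piEquivPiSubtypeProd_apply, hp, hnp]
  constructor
  · rintro ⟨⟨hp0, hp1⟩, hnp0, hnp1⟩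
    exact ⟨fun i => if hi : p i then hp0 ⟨i, hi⟩ else hnp0 ⟨i, hi⟩, hp1, hnp1⟩
  · rintro ⟨h0, hp1, hnp1⟩
    exact ⟨⟨fun i => h0 i, hp1⟩, fun i => h0 i, hnp1⟩

lemma measurableSet_cornerSimplexProd (p : ι → Prop) [DecidablePred p] :
    MeasurableSet (cornerSimplexProd p) :=
  ((measurableSet_cornerSimplex _).prod (measurableSet_cornerSimplex _)).preimage
    (MeasurableEquiv.measurable _)

lemma volume_cornerSimplexProd (p : ι → Prop) [DecidablePred p] :
    volume (cornerSimplexProd p) = ENNReal.ofReal ((Fintype.card {i // p i})! : ℝ)⁻¹ *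
      ENNReal.ofReal ((Fintype.card {i // ¬p i})! : ℝ)⁻¹ := by
  rw [cornerSimplexProd, (volume_preserving_piEquivPiSubtypeProd _ _).measure_preimage
    ((measurableSet_cornerSimplex _).prod (measurableSet_cornerSimplex _)).nullMeasurableSet,
    Measure.volume_eq_prod, Measure.prod_prod, volume_cornerSimplex, volume_cornerSimplex]

variable [DecidableEq ι]

lemma cornerSimplex_sub_cornerSimplex :
    cornerSimplex ι - cornerSimplex ι = ⋃ A, signFlip A ⁻¹' cornerSimplexProd (· ∈ A) := by
  ext x
  simp only [Set.mem_iUnion, Set.mem_preimage]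
  constructor
  · rintro ⟨a, ⟨ha0, ha1⟩, b, ⟨hb0, hb1⟩, rfl⟩
    refine ⟨({i | 0 ≤ (a - b) i} : Finset ι), ?_⟩
    rw [signFlip_filter_nonneg_eq_abs, mem_cornerSimplexProd]
    refine ⟨abs_nonneg _, ?_, ?_⟩
    · refine (Finset.sum_le_sum fun i hi => ?_).trans
        ((Finset.sum_le_univ_sum_of_nonneg ha0).trans ha1)
      simp only [Finset.mem_filter, Finset.mem_univ, true_and] at hi
      rw [Pi.abs_apply, abs_of_nonneg hi, Pi.sub_apply]
      linarith [show 0 ≤ b i from hb0 i]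
    · refine (Finset.sum_le_sum fun i hi => ?_).trans
        ((Finset.sum_le_univ_sum_of_nonneg hb0).trans hb1)
      simp only [Finset.mem_filter, Finset.mem_univ, true_and, not_le] at hi
      rw [Pi.abs_apply, abs_of_neg hi, Pi.sub_apply]
      linarith [show 0 ≤ a i from ha0 i]
  · rintro ⟨A, hx⟩
    obtain ⟨hy0, hyA, hyAc⟩ := mem_cornerSimplexProd.mp hx
    refine ⟨fun i => if i ∈ A then signFlip A x i else 0, ⟨fun i => ?_, ?_⟩,
      fun i => if i ∈ A then 0 else signFlip A x i, ⟨fun i => ?_, ?_⟩, ?_⟩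
    · dsimp only
      split_ifs
      exacts [hy0 i, le_rfl]
    · rwa [← Finset.sum_filter]
    · dsimp only
      split_ifs
      exacts [le_rfl, hy0 i]
    · rw [Finset.sum_filter] at hyAc
      simpa only [ite_not] using hyAc
    · ext i
      by_cases hi : i ∈ A <;> simp [signFlip, hi]

end DifferenceBody

lemma sum_range_choose_mul_inv_factorial_mul (n : ℕ) :
    ∑ k ∈ range (n + 1), (n.choose k : ℝ) * ((k ! : ℝ)⁻¹ * ((n - k)! : ℝ)⁻¹) =
      (2 * n).choose n * (n ! : ℝ)⁻¹ := by
  have hterm : ∀ k ∈ range (n + 1),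
      (n.choose k : ℝ) * ((k ! : ℝ)⁻¹ * ((n - k)! : ℝ)⁻¹) =
        (n.choose k : ℝ) ^ 2 * (n ! : ℝ)⁻¹ := by
    intro k hk
    rw [Nat.cast_choose ℝ (mem_range_succ_iff.mp hk)]
    field_simp
  rw [sum_congr rfl hterm, ← sum_mul]
  exact_mod_cast congrArg (fun m : ℕ => (m : ℝ) * (n ! : ℝ)⁻¹) (Nat.sum_range_choose_sq n)

lemma volume_cornerSimplex_sub_cornerSimplex (ι : Type*) [Fintype ι] :
    volume (cornerSimplex ι - cornerSimplex ι) =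
      (2 * Fintype.card ι).choose (Fintype.card ι) * volume (cornerSimplex ι) := by
  classical
  rw [cornerSimplex_sub_cornerSimplex, volume_iUnion_preimage_signFlip _
    (fun _ _ hy => (mem_cornerSimplexProd.mp hy).1) (fun _ => measurableSet_cornerSimplexProd _)]
  simp only [volume_cornerSimplexProd, Fintype.card_subtype_compl, Fintype.card_coe,
    ← ENNReal.ofReal_mul (inv_nonneg.mpr (Nat.cast_nonneg _))]
  rw [← ENNReal.ofReal_sum_of_nonneg (fun _ _ => by positivity), volume_cornerSimplex,
    ← ENNReal.ofReal_natCast, ← ENNReal.ofReal_mul (Nat.cast_nonneg _),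
    ← Finset.powerset_univ,
    Finset.sum_powerset_apply_card fun k => (k ! : ℝ)⁻¹ * ((Fintype.card ι - k)! : ℝ)⁻¹,
    Finset.card_univ, ← sum_range_choose_mul_inv_factorial_mul]
  simp only [nsmul_eq_mul]

section Geometry

variable {E : Type*} [AddCommGroup E] [Module ℝ E] {n : ℕ}

lemma linearCombination_cons_one_sub_sum (v : Fin (n + 1) → E) (x : Fin n → ℝ) :
    Fintype.linearCombination ℝ v (Fin.cons (1 - ∑ i, x i) x) =
      v 0 + Fintype.linearCombination ℝ (fun i => v i.succ - v 0) x := by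
  simp only [Fintype.linearCombination_apply, Fin.sum_univ_succ, Fin.cons_zero, Fin.cons_succ,
    smul_sub, sum_sub_distrib, sub_smul, one_smul, ← sum_smul]
  abel

lemma convexHull_range_eq_vadd_image_cornerSimplex (v : Fin (n + 1) → E) :
    convexHull ℝ (Set.range v) =
      v 0 +ᵥ Fintype.linearCombination ℝ (fun i => v i.succ - v 0) '' cornerSimplex (Fin n) := by
  classical
  have hstd : convexHull ℝ (Set.range v) =
      Fintype.linearCombination ℝ v '' stdSimplex ℝ (Fin (n + 1)) := by
    rw [← convexHull_rangle_single_eq_stdSimplex, LinearMap.image_convexHull, ← Set.range_comp]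
    congr
    ext i
    simp
  rw [hstd]
  ext y
  simp only [Set.mem_image, Set.mem_vadd_set, vadd_eq_add]
  constructor
  · rintro ⟨w, ⟨hw0, hw1⟩, rfl⟩
    rw [Fin.sum_univ_succ] at hw1
    have hw : Fin.cons (1 - ∑ i, Fin.tail w i) (Fin.tail w) = w := by
      conv_rhs => rw [← Fin.cons_self_tail w]
      congr 1
      simp only [Fin.tail]
      linarith
    refine ⟨_, ⟨Fin.tail w, ⟨fun i => hw0 i.succ, ?_⟩, rfl⟩, ?_⟩
    · simp only [Fin.tail]
      linarith [hw0 0]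
    · rw [← linearCombination_cons_one_sub_sum, hw]
  · rintro ⟨_, ⟨x, ⟨hx0, hx1⟩, rfl⟩, rfl⟩
    refine ⟨Fin.cons (1 - ∑ i, x i) x, ⟨fun j => ?_, ?_⟩,
      linearCombination_cons_one_sub_sum v x⟩
    · refine Fin.cases ?_ (fun i => ?_) j
      · simpa using hx1
      · simpa using hx0 i
    · simp [Fin.sum_univ_succ]

end Geometry

lemma Set.vadd_set_sub_vadd_set {G : Type*} [AddCommGroup G] (a : G) (s t : Set G) :
    (a +ᵥ s) - (a +ᵥ t) = s - t := by
  ext x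
  simp [Set.mem_sub, Set.mem_vadd_set]

lemma volume_convexHull_sub_convexHull {n : ℕ} (v : Fin (n + 1) → Fin n → ℝ) :
    volume (convexHull ℝ (Set.range v) - convexHull ℝ (Set.range v)) =
      (2 * n).choose n * volume (convexHull ℝ (Set.range v)) := by
  rw [convexHull_range_eq_vadd_image_cornerSimplex, Set.vadd_set_sub_vadd_set, measure_vadd,
    ← Set.image_sub, Measure.addHaar_image_linearMap, Measure.addHaar_image_linearMap,
    volume_cornerSimplex_sub_cornerSimplex, Fintype.card_fin, mul_left_comm]

theorem vol_difference_body_simplex_general (n : ℕ)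
    (p : Fin (n + 1) → EuclideanSpace ℝ (Fin n))
    (T : Set (EuclideanSpace ℝ (Fin n))) (hT : T = convexHull ℝ (Set.range p)) :
    volume (T + (-T)) = ((2 * n).choose n : ENNReal) * volume T := by
  let e : EuclideanSpace ℝ (Fin n) →ₗ[ℝ] Fin n → ℝ := (WithLp.linearEquiv 2 ℝ _).toLinearMap
  have hvol : ∀ S, volume (e '' S) = volume S := fun S => by
    rw [LinearEquiv.coe_toLinearMap, LinearEquiv.image_eq_preimage_symm]
    exact (EuclideanSpace.volume_preserving_symm_measurableEquiv_toLp (Fin n)).symm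
      |>.measure_preimage_equiv S
  rw [← sub_eq_add_neg, ← hvol, ← hvol, Set.image_sub, hT, e.image_convexHull, ← Set.range_comp]
  exact volume_convexHull_sub_convexHull _

/-- (Rogers–Shephard, equality case for simplices) For an `n`-dimensional simplex `T` in
`ℝ^n`, the difference body satisfies `vol(T + (−T)) = C(2n,n) · vol(T)`. -/
theorem vol_difference_body_simplex (n : ℕ) (hn : 1 ≤ n)
    (p : Fin (n + 1) → EuclideanSpace ℝ (Fin n)) (hp : AffineIndependent ℝ p)
    (T : Set (EuclideanSpace ℝ (Fin n))) (hT : T = convexHull ℝ (Set.range p)) :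
    volume (T + (-T)) = ((2 * n).choose n : ENNReal) * volume T :=
  vol_difference_body_simplex_general n p T hT
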